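/- (Gronwall lemma with singular kernel) Let 0 < β < 1, T > 0, a ≥ 0, c > 0, and let f : [0,T] → [0,∞) be a bounded measurable function satisfying f(t) ≤ a + c∫₀ᵗ (1 + (t−s)^{−β}) f(s) ds for all t ∈ [0,T]. Then there exists a constant K = K(c, β, T), independent of a, such that f(t) ≤ a·K for all t ∈ [0,T]. In particular, if a = 0 then f ≡ 0. -/

import Mathlib

/-!
Bielecki-norm argument. For `λ > 0` let `M = sup_{[0,T]} e^{-λ s} f(s)`, finite because `f` is
bounded. Substituting `u = t - s`,
`∫₀ᵗ k(t-s) f(s) ds ≤ M e^{λ t} ∫₀^∞ k(u) e^{-λ u} du`, and for `k(u) = 1 + u^{-β}` this Laplace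
transform equals `1/λ + Γ(1-β) λ^{β-1}`, which tends to `0` as `λ → ∞`. Choosing `λ` with
`c · (Laplace transform) ≤ 1/2`, the inequality gives `M ≤ a + M/2`, so
`f(t) ≤ 2a e^{λT}`.
-/

open MeasureTheory Real Set Filter Topology

section KernelGronwall

variable {k f : ℝ → ℝ} {a c lam T : ℝ}

theorem kernel_mul_exp_eq_exp_mul (t s : ℝ) :
    k (t - s) * exp (lam * s) = exp (lam * t) * (k (t - s) * exp (-(lam * (t - s)))) := by
  rw [mul_left_comm, ← exp_add]
  ring_nf

theorem intervalIntegrable_kernel_mul_exp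
    (hkI : IntegrableOn (fun u => k u * exp (-(lam * u))) (Ioi 0)) {t : ℝ} (ht : 0 ≤ t) :
    IntervalIntegrable (fun s => k (t - s) * exp (lam * s)) volume 0 t := by
  have hI : IntervalIntegrable (fun u => k u * exp (-(lam * u))) volume 0 t :=
    (intervalIntegrable_iff_integrableOn_Ioc_of_le ht).2 (hkI.mono_set Ioc_subset_Ioi_self)
  simpa only [sub_zero, sub_self, ← kernel_mul_exp_eq_exp_mul] using
    ((hI.comp_sub_left t).symm.const_mul (exp (lam * t)))

theorem intervalIntegral_kernel_mul_exp_le (hk : ∀ u ≥ 0, 0 ≤ k u)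
    (hkI : IntegrableOn (fun u => k u * exp (-(lam * u))) (Ioi 0)) {t : ℝ} (ht : 0 ≤ t) :
    ∫ s in 0..t, k (t - s) * exp (lam * s) ≤
      exp (lam * t) * ∫ u in Ioi 0, k u * exp (-(lam * u)) := by
  simp_rw [kernel_mul_exp_eq_exp_mul t]
  rw [intervalIntegral.integral_const_mul, intervalIntegral.integral_comp_sub_left
    (fun u => k u * exp (-(lam * u))), sub_self, sub_zero, intervalIntegral.integral_of_le ht]
  refine mul_le_mul_of_nonneg_left (setIntegral_mono_set hkI ?_ Ioc_subset_Ioi_self.eventuallyLE)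
    (exp_pos _).le
  filter_upwards [ae_restrict_mem measurableSet_Ioi] with u hu
  exact mul_nonneg (hk u hu.le) (exp_pos _).le

theorem intervalIntegral_kernel_mul_le_of_le_exp (hk : ∀ u ≥ 0, 0 ≤ k u)
    (hkI : IntegrableOn (fun u => k u * exp (-(lam * u))) (Ioi 0)) {M t : ℝ} (ht : 0 ≤ t)
    (hf0 : ∀ s ∈ Icc 0 t, 0 ≤ f s) (hfM : ∀ s ∈ Icc 0 t, f s ≤ M * exp (lam * s)) :
    ∫ s in 0..t, k (t - s) * f s ≤
      M * exp (lam * t) * ∫ u in Ioi 0, k u * exp (-(lam * u)) := by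
  have hM : 0 ≤ M := by
    simpa using (hf0 0 ⟨le_rfl, ht⟩).trans (hfM 0 ⟨le_rfl, ht⟩)
  have hdom : ∫ s in 0..t, k (t - s) * f s ≤ ∫ s in 0..t, M * (k (t - s) * exp (lam * s)) := by
    rw [intervalIntegral.integral_of_le ht, intervalIntegral.integral_of_le ht]
    refine setIntegral_mono_of_nonneg (fun s hs => ?_) (fun s hs => ?_) ?_
    · exact mul_nonneg (hk _ (sub_nonneg.2 hs.2)) (hf0 s (Ioc_subset_Icc_self hs))
    · rw [mul_left_comm]
      exact mul_le_mul_of_nonneg_left (hfM s (Ioc_subset_Icc_self hs))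
        (hk _ (sub_nonneg.2 hs.2))
    · exact ((intervalIntegrable_kernel_mul_exp hkI ht).const_mul M).1
  calc ∫ s in 0..t, k (t - s) * f s
      ≤ M * ∫ s in 0..t, k (t - s) * exp (lam * s) := by
        rwa [← intervalIntegral.integral_const_mul]
    _ ≤ M * exp (lam * t) * ∫ u in Ioi 0, k u * exp (-(lam * u)) := by
        rw [mul_assoc]
        exact mul_le_mul_of_nonneg_left (intervalIntegral_kernel_mul_exp_le hk hkI ht) hM

theorem exp_neg_mul_le_one (hlam : 0 ≤ lam) {s : ℝ} (hs : 0 ≤ s) : exp (-(lam * s)) ≤ 1 :=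
  exp_le_one_iff.2 (neg_nonpos.2 (mul_nonneg hlam hs))

theorem bddAbove_exp_neg_mul_image (hlam : 0 ≤ lam) (hf0 : ∀ t ∈ Icc 0 T, 0 ≤ f t)
    (hfB : BddAbove (f '' Icc 0 T)) :
    BddAbove ((fun s => exp (-(lam * s)) * f s) '' Icc 0 T) := by
  obtain ⟨B, hB⟩ := hfB
  refine ⟨B, ?_⟩
  rintro _ ⟨s, hs, rfl⟩
  exact (mul_le_of_le_one_left (hf0 s hs) (exp_neg_mul_le_one hlam hs.1)).trans
    (hB ⟨s, hs, rfl⟩)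

theorem le_two_mul_exp_of_le_add_integral_kernel (ha : 0 ≤ a) (hc : 0 ≤ c) (hlam : 0 ≤ lam)
    (hk : ∀ u ≥ 0, 0 ≤ k u) (hkI : IntegrableOn (fun u => k u * exp (-(lam * u))) (Ioi 0))
    (hcL : c * ∫ u in Ioi 0, k u * exp (-(lam * u)) ≤ 1 / 2)
    (hf0 : ∀ t ∈ Icc 0 T, 0 ≤ f t) (hfB : BddAbove (f '' Icc 0 T))
    (hf : ∀ t ∈ Icc 0 T, f t ≤ a + c * ∫ s in 0..t, k (t - s) * f s) :
    ∀ t ∈ Icc 0 T, f t ≤ 2 * a * exp (lam * T) := by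
  intro t ht
  set L := ∫ u in Ioi 0, k u * exp (-(lam * u))
  set M := sSup ((fun s => exp (-(lam * s)) * f s) '' Icc 0 T)
  have hbdd := bddAbove_exp_neg_mul_image hlam hf0 hfB
  have hfM : ∀ s ∈ Icc 0 T, f s ≤ M * exp (lam * s) := by
    intro s hs
    have : exp (-(lam * s)) * f s ≤ M := le_csSup hbdd ⟨s, hs, rfl⟩
    rwa [exp_neg, inv_mul_le_iff₀ (exp_pos _), mul_comm] at this
  have hM0 : 0 ≤ M :=
    (mul_nonneg (exp_pos _).le (hf0 t ht)).trans (le_csSup hbdd ⟨t, ht, rfl⟩)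
  have hconv : ∀ s ∈ Icc 0 T, c * ∫ r in 0..s, k (s - r) * f r ≤ M / 2 * exp (lam * s) := by
    intro s hs
    have hsub : Icc 0 s ⊆ Icc 0 T := Icc_subset_Icc_right hs.2
    calc c * ∫ r in 0..s, k (s - r) * f r
        ≤ c * (M * exp (lam * s) * L) := mul_le_mul_of_nonneg_left
          (intervalIntegral_kernel_mul_le_of_le_exp hk hkI hs.1 (fun r hr => hf0 r (hsub hr))
            (fun r hr => hfM r (hsub hr))) hc
      _ = M * exp (lam * s) * (c * L) := by ring
      _ ≤ M * exp (lam * s) * (1 / 2) := mul_le_mul_of_nonneg_left hcL (by positivity)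
      _ = M / 2 * exp (lam * s) := by ring
  have hMle : M ≤ a + M / 2 := by
    refine csSup_le ⟨_, t, ht, rfl⟩ ?_
    rintro _ ⟨s, hs, rfl⟩
    calc exp (-(lam * s)) * f s ≤ exp (-(lam * s)) * (a + M / 2 * exp (lam * s)) :=
          mul_le_mul_of_nonneg_left ((hf s hs).trans (by linarith [hconv s hs])) (exp_pos _).le
      _ = exp (-(lam * s)) * a + M / 2 := by
          rw [mul_add, mul_left_comm, ← exp_add, neg_add_cancel, exp_zero, mul_one]
      _ ≤ a + M / 2 := by
          gcongr
          exact mul_le_of_le_one_left ha (exp_neg_mul_le_one hlam hs.1)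
  calc f t ≤ M * exp (lam * t) := hfM t ht
    _ ≤ 2 * a * exp (lam * T) := by
        gcongr
        · linarith
        · exact ht.2

end KernelGronwall

section SingularKernel

variable {β r : ℝ}

theorem integrableOn_rpow_sub_one_mul_exp_neg_mul {a : ℝ} (ha : 0 < a) (hr : 0 < r) :
    IntegrableOn (fun u : ℝ => u ^ (a - 1) * exp (-(r * u))) (Ioi 0) :=
  .of_integral_ne_zero (by rw [integral_rpow_mul_exp_neg_mul_Ioi ha hr]; positivity)

theorem one_add_rpow_neg_mul_exp_eq (u : ℝ) :
    (1 + u ^ (-β)) * exp (-(r * u)) =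
      u ^ ((1 : ℝ) - 1) * exp (-(r * u)) + u ^ ((1 - β) - 1) * exp (-(r * u)) := by
  rw [sub_self, rpow_zero, sub_sub_cancel_left, add_mul]

theorem integrableOn_one_add_rpow_neg_mul_exp (hβ : β < 1) (hr : 0 < r) :
    IntegrableOn (fun u : ℝ => (1 + u ^ (-β)) * exp (-(r * u))) (Ioi 0) := by
  simp_rw [one_add_rpow_neg_mul_exp_eq]
  exact (integrableOn_rpow_sub_one_mul_exp_neg_mul one_pos hr).add
    (integrableOn_rpow_sub_one_mul_exp_neg_mul (sub_pos.2 hβ) hr)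

theorem integral_one_add_rpow_neg_mul_exp (hβ : β < 1) (hr : 0 < r) :
    ∫ u in Ioi 0, (1 + u ^ (-β)) * exp (-(r * u)) =
      (1 / r) ^ (1 : ℝ) * Gamma 1 + (1 / r) ^ (1 - β) * Gamma (1 - β) := by
  simp_rw [one_add_rpow_neg_mul_exp_eq]
  rw [integral_add (integrableOn_rpow_sub_one_mul_exp_neg_mul one_pos hr)
    (integrableOn_rpow_sub_one_mul_exp_neg_mul (sub_pos.2 hβ) hr),
    integral_rpow_mul_exp_neg_mul_Ioi one_pos hr,
    integral_rpow_mul_exp_neg_mul_Ioi (sub_pos.2 hβ) hr]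

theorem tendsto_one_div_rpow_atTop {a : ℝ} (ha : 0 < a) :
    Tendsto (fun r : ℝ => (1 / r) ^ a) atTop (𝓝 0) :=
  (tendsto_rpow_neg_atTop ha).congr' <| (eventually_gt_atTop 0).mono fun r hr => by
    dsimp only; rw [one_div, inv_rpow hr.le, rpow_neg hr.le]

theorem tendsto_integral_one_add_rpow_neg_mul_exp (hβ : β < 1) :
    Tendsto (fun r => ∫ u in Ioi 0, (1 + u ^ (-β)) * exp (-(r * u))) atTop (𝓝 0) := by
  have hlim := ((tendsto_one_div_rpow_atTop one_pos).mul_const (Gamma 1)).add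
    ((tendsto_one_div_rpow_atTop (sub_pos.2 hβ)).mul_const (Gamma (1 - β)))
  simp only [zero_mul, add_zero] at hlim
  exact hlim.congr' <| (eventually_gt_atTop 0).mono fun r hr =>
    (integral_one_add_rpow_neg_mul_exp hβ hr).symm

end SingularKernel

theorem gronwall_singular_kernel_general (β T c : ℝ) (hβ : β ∈ Set.Ioo (0:ℝ) 1)
    (hc : 0 < c) :
    ∃ K > 0, ∀ a ≥ (0:ℝ), ∀ f : ℝ → ℝ, Measurable f →
      (∀ t ∈ Set.Icc (0:ℝ) T, 0 ≤ f t) →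
      (∃ B, ∀ t ∈ Set.Icc (0:ℝ) T, f t ≤ B) →
      (∀ t ∈ Set.Icc (0:ℝ) T, f t ≤ a + c * ∫ s in (0:ℝ)..t, (1 + (t - s) ^ (-β)) * f s) →
      ∀ t ∈ Set.Icc (0:ℝ) T, f t ≤ a * K := by
  obtain ⟨lam, hcL, hlam⟩ : ∃ lam, c * ∫ u in Ioi 0, (1 + u ^ (-β)) * exp (-(lam * u)) ≤ 1 / 2
      ∧ 0 < lam := by
    have hlim := (tendsto_integral_one_add_rpow_neg_mul_exp hβ.2).const_mul c
    rw [mul_zero] at hlim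
    exact ((hlim.eventually (ge_mem_nhds one_half_pos)).and (eventually_gt_atTop 0)).exists
  refine ⟨2 * exp (lam * T), by positivity, fun a ha f _ hf0 ⟨B, hB⟩ hf t ht => ?_⟩
  rw [← mul_assoc, mul_comm a]
  exact le_two_mul_exp_of_le_add_integral_kernel (k := fun u => 1 + u ^ (-β)) ha hc.le hlam.le
    (fun u hu => add_nonneg zero_le_one (rpow_nonneg hu _))
    (integrableOn_one_add_rpow_neg_mul_exp hβ.2 hlam) hcL hf0
    ⟨B, by rintro _ ⟨s, hs, rfl⟩; exact hB s hs⟩ hf t ht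

theorem gronwall_singular_kernel (β T c : ℝ) (hβ : β ∈ Set.Ioo (0:ℝ) 1) (hT : 0 < T)
    (hc : 0 < c) :
    ∃ K > 0, ∀ a ≥ (0:ℝ), ∀ f : ℝ → ℝ, Measurable f →
      (∀ t ∈ Set.Icc (0:ℝ) T, 0 ≤ f t) →
      (∃ B, ∀ t ∈ Set.Icc (0:ℝ) T, f t ≤ B) →
      (∀ t ∈ Set.Icc (0:ℝ) T, f t ≤ a + c * ∫ s in (0:ℝ)..t, (1 + (t - s) ^ (-β)) * f s) →
      ∀ t ∈ Set.Icc (0:ℝ) T, f t ≤ a * K :=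
  gronwall_singular_kernel_general β T c hβ hc
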